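/- Let μ and ν be finite measures on a measurable space (S, B(S)) such that for some constants a > 0 and b < ∞, a·ν(A) ≤ μ(A) ≤ b·ν(A) for all A ∈ B(S). Let m be the complex measure m(A) = ∫ exp(i u g(y)) Q(y, A) P(dy) where Q is a transition kernel, g a measurable function, and P a probability measure, under the assumption that a·ν(A) ≤ Q(y,A) ≤ b·ν(A) for ν-a.e. parameters. Then for any finite measurable partition (Aᵢ) of S, Σᵢ |m(Aᵢ)| ≤ 1 - (a⁴/(2b))(1 - |∫ exp(i u g(y)) P(dy)|²). -/

import Mathlib

/-!
Write `c y = exp (i u g(y))` and `q_A(y) = Q(y, A)`. Since `q_A ≥ a ν(A)` almost surely, split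
`m(A) = a ν(A) ∫ c dP + ∫ c (q_A - a ν(A)) dP`; the second term has norm at most
`∫ q_A dP - a ν(A)` because `|c| = 1`. Summing over the partition gives
`Σᵢ |m(Aᵢ)| ≤ a |φ| + (1 - a)` with `φ = ∫ c dP`, and
`a (1 - |φ|) ≥ (a⁴ / (2b)) (1 - |φ|²)` because `1 + |φ| ≤ 2`, `a⁴ ≤ a` and `b ≥ 1`.
-/

open MeasureTheory

lemma ae_mem_of_subset_of_prob_eq_one {α : Type*} [MeasurableSpace α] {μ : Measure α}
    [IsProbabilityMeasure μ] {s t : Set α} (ht : MeasurableSet t) (hst : s ⊆ t) (hs : μ s = 1) :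
    ∀ᵐ x ∂μ, x ∈ t :=
  (mem_ae_iff_prob_eq_one ht).2 (le_antisymm prob_le_one (hs ▸ measure_mono hst))

lemma norm_integral_smul_le_of_const_le {α E : Type*} [MeasurableSpace α]
    [NormedAddCommGroup E] [NormedSpace ℝ E] {μ : Measure α} [IsFiniteMeasure μ]
    {c : α → E} {q : α → ℝ} {r : ℝ} (hc : Integrable c μ) (hc1 : ∀ᵐ x ∂μ, ‖c x‖ ≤ 1)
    (hq : Integrable q μ) (hr : 0 ≤ r) (hrq : ∀ᵐ x ∂μ, r ≤ q x) :
    ‖∫ x, q x • c x ∂μ‖ ≤ r * ‖∫ x, c x ∂μ‖ + (∫ x, q x ∂μ - r * μ.real Set.univ) := by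
  have hexcess : Integrable (fun x ↦ (q x - r) • c x) μ :=
    (hq.sub (integrable_const r)).smul_bdd 1 hc.aestronglyMeasurable hc1
  have hsplit : ∫ x, q x • c x ∂μ = r • ∫ x, c x ∂μ + ∫ x, (q x - r) • c x ∂μ := by
    rw [← integral_smul, ← integral_add (f := fun x ↦ r • c x) (hc.smul r) hexcess]
    simp only [← add_smul, add_sub_cancel]
  have hexcess_le : ‖∫ x, (q x - r) • c x ∂μ‖ ≤ ∫ x, (q x - r) ∂μ := by
    refine norm_integral_le_of_norm_le (hq.sub (integrable_const r)) ?_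
    filter_upwards [hc1, hrq] with x hcx hrx
    rw [norm_smul, Real.norm_of_nonneg (sub_nonneg.2 hrx)]
    exact mul_le_of_le_one_right (sub_nonneg.2 hrx) hcx
  calc ‖∫ x, q x • c x ∂μ‖
      = ‖r • ∫ x, c x ∂μ + ∫ x, (q x - r) • c x ∂μ‖ := by rw [hsplit]
    _ ≤ ‖r • ∫ x, c x ∂μ‖ + ‖∫ x, (q x - r) • c x ∂μ‖ := norm_add_le _ _
    _ ≤ r * ‖∫ x, c x ∂μ‖ + ∫ x, (q x - r) ∂μ := by
      rw [norm_smul, Real.norm_of_nonneg hr]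
      gcongr
    _ = r * ‖∫ x, c x ∂μ‖ + (∫ x, q x ∂μ - r * μ.real Set.univ) := by
      rw [integral_sub hq (integrable_const r), integral_const, smul_eq_mul, mul_comm (μ.real _)]

lemma ProbabilityTheory.Kernel.integrable_toReal_apply {α β : Type*} [MeasurableSpace α]
    [MeasurableSpace β] (κ : Kernel α β) [IsFiniteKernel κ] (μ : Measure α) [IsFiniteMeasure μ]
    {s : Set β} (hs : MeasurableSet s) : Integrable (fun x ↦ (κ x s).toReal) μ :=
  .of_bound (κ.measurable_coe hs).ennreal_toReal.aestronglyMeasurable κ.bound.toReal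
    (.of_forall fun x ↦ by
      rw [Real.norm_of_nonneg ENNReal.toReal_nonneg]
      exact ENNReal.toReal_mono κ.bound_ne_top (κ.measure_le_bound x s))

lemma sum_measureReal_of_iUnion_eq_univ {α ι : Type*} [MeasurableSpace α] [Fintype ι]
    (μ : Measure α) [IsFiniteMeasure μ] {A : ι → Set α} (hA : ∀ i, MeasurableSet (A i))
    (hdisj : Pairwise (Function.onFun Disjoint A)) (hcov : ⋃ i, A i = Set.univ) :
    ∑ i, μ.real (A i) = μ.real Set.univ := by
  rw [← hcov, measureReal_iUnion_fintype hdisj hA]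

lemma ProbabilityTheory.Kernel.sum_integral_toReal_of_iUnion_eq_univ {α β ι : Type*}
    [MeasurableSpace α] [MeasurableSpace β] [Fintype ι] (κ : Kernel α β) [IsMarkovKernel κ]
    (μ : Measure α) [IsProbabilityMeasure μ] {A : ι → Set β} (hA : ∀ i, MeasurableSet (A i))
    (hdisj : Pairwise (Function.onFun Disjoint A)) (hcov : ⋃ i, A i = Set.univ) :
    ∑ i, ∫ x, (κ x (A i)).toReal ∂μ = 1 := by
  rw [← integral_finsetSum _ fun i _ ↦ κ.integrable_toReal_apply μ (hA i)]
  simp_rw [← measureReal_def, sum_measureReal_of_iUnion_eq_univ _ hA hdisj hcov, probReal_univ]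
  simp

lemma pow_four_div_mul_one_sub_sq_le {a b t : ℝ} (ha0 : 0 ≤ a) (ha1 : a ≤ 1) (hb1 : 1 ≤ b)
    (ht0 : 0 ≤ t) (ht1 : t ≤ 1) : a ^ 4 / (2 * b) * (1 - t ^ 2) ≤ a * (1 - t) := by
  have ha4 : a ^ 4 ≤ a := pow_le_of_le_one ha0 ha1 (by norm_num)
  rw [div_mul_eq_mul_div, div_le_iff₀ (by positivity)]
  calc a ^ 4 * (1 - t ^ 2) ≤ a * ((1 - t) * (1 + t)) := by
        rw [show 1 - t ^ 2 = (1 - t) * (1 + t) by ring]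
        exact mul_le_mul_of_nonneg_right ha4 (by nlinarith)
    _ ≤ a * (1 - t) * (2 * b) := by nlinarith [mul_nonneg ha0 (sub_nonneg.2 ht1)]

theorem total_variation_bound_general
    {S : Type*} [MeasurableSpace S]
    (Q : ProbabilityTheory.Kernel S S) [ProbabilityTheory.IsMarkovKernel Q]
    (P ν : Measure S) [IsProbabilityMeasure P] [IsProbabilityMeasure ν]
    (g : S → ℝ) (hg : Measurable g) (u : ℝ)
    (a b : ℝ) (ha : 0 < a) (ha1 : a ≤ 1) (hb1 : 1 ≤ b)
    (S' : Set S) (hS' : P S' = 1)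
    (hdom : ∀ y ∈ S', ∀ A : Set S, MeasurableSet A →
      a * (ν A).toReal ≤ (Q y A).toReal ∧ (Q y A).toReal ≤ b * (ν A).toReal)
    (n : ℕ) (A : Fin n → Set S) (hAmeas : ∀ i, MeasurableSet (A i))
    (hAdisj : Pairwise (Function.onFun Disjoint A))
    (hAcov : (⋃ i, A i) = Set.univ) :
    ∑ i, ‖(∫ y, Complex.exp (u * g y * Complex.I) *
        ((Q y (A i)).toReal : ℂ) ∂P)‖ ≤
      1 - (a ^ 4 / (2 * b)) *
        (1 - ‖(∫ y, Complex.exp (u * g y * Complex.I) ∂P)‖ ^ 2) := by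
  set c : S → ℂ := fun y ↦ Complex.exp (u * g y * Complex.I)
  set φ := ∫ y, c y ∂P
  have hc_norm : ∀ y, ‖c y‖ = 1 := fun y ↦ by
    simpa using Complex.norm_exp_ofReal_mul_I (u * g y)
  have hc_int : Integrable c P :=
    .of_bound (by fun_prop) 1 (.of_forall fun y ↦ (hc_norm y).le)
  have hφ : ‖φ‖ ≤ 1 := by
    simpa using norm_integral_le_of_norm_le_const (μ := P) (.of_forall fun y ↦ (hc_norm y).le)
  have hterm : ∀ i, ‖∫ y, c y * ((Q y (A i)).toReal : ℂ) ∂P‖ ≤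
      a * ν.real (A i) * ‖φ‖ + (∫ y, (Q y (A i)).toReal ∂P - a * ν.real (A i)) := fun i ↦ by
    have hlower : ∀ᵐ y ∂P, a * ν.real (A i) ≤ (Q y (A i)).toReal :=
      ae_mem_of_subset_of_prob_eq_one
        (measurableSet_le measurable_const (Q.measurable_coe (hAmeas i)).ennreal_toReal)
        (fun y hy ↦ (hdom y hy (A i) (hAmeas i)).1) hS'
    simpa [mul_comm (c _), ← Complex.real_smul] using
      norm_integral_smul_le_of_const_le hc_int (.of_forall fun y ↦ (hc_norm y).le)
        (Q.integrable_toReal_apply P (hAmeas i)) (by positivity) hlower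
  calc ∑ i, ‖∫ y, c y * ((Q y (A i)).toReal : ℂ) ∂P‖
      ≤ ∑ i, (a * ν.real (A i) * ‖φ‖ + (∫ y, (Q y (A i)).toReal ∂P - a * ν.real (A i))) :=
        Finset.sum_le_sum fun i _ ↦ hterm i
    _ = a * ‖φ‖ + (1 - a) := by
      rw [Finset.sum_add_distrib, Finset.sum_sub_distrib, ← Finset.sum_mul, ← Finset.mul_sum,
        sum_measureReal_of_iUnion_eq_univ ν hAmeas hAdisj hAcov, probReal_univ,
        Q.sum_integral_toReal_of_iUnion_eq_univ P hAmeas hAdisj hAcov]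
      ring
    _ ≤ 1 - a ^ 4 / (2 * b) * (1 - ‖φ‖ ^ 2) := by
      linarith [pow_four_div_mul_one_sub_sq_le ha.le ha1 hb1 (norm_nonneg φ) hφ]

/-- Total-variation bound for the complex measure `m(A) = ∫ exp(iug(y)) Q(y,A) P(dy)`:
for any finite measurable partition `(Aᵢ)` of `S`,
`Σᵢ |m(Aᵢ)| ≤ 1 - (a⁴/(2b))(1 - |∫ exp(iug) dP|²)`. -/
theorem total_variation_bound
    {S : Type*} [MeasurableSpace S]
    (Q : ProbabilityTheory.Kernel S S) [ProbabilityTheory.IsMarkovKernel Q]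
    (P ν : Measure S) [IsProbabilityMeasure P] [IsProbabilityMeasure ν]
    (g : S → ℝ) (hg : Measurable g) (u : ℝ)
    (a b : ℝ) (ha : 0 < a) (ha1 : a ≤ 1) (hb1 : 1 ≤ b)
    (S' : Set S) (hS'meas : MeasurableSet S') (hS' : P S' = 1)
    (hdom : ∀ y ∈ S', ∀ A : Set S, MeasurableSet A →
      a * (ν A).toReal ≤ (Q y A).toReal ∧ (Q y A).toReal ≤ b * (ν A).toReal)
    (n : ℕ) (A : Fin n → Set S) (hAmeas : ∀ i, MeasurableSet (A i))
    (hAdisj : Pairwise (Function.onFun Disjoint A))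
    (hAcov : (⋃ i, A i) = Set.univ) :
    ∑ i, ‖(∫ y, Complex.exp (u * g y * Complex.I) *
        ((Q y (A i)).toReal : ℂ) ∂P)‖ ≤
      1 - (a ^ 4 / (2 * b)) *
        (1 - ‖(∫ y, Complex.exp (u * g y * Complex.I) ∂P)‖ ^ 2) :=
  total_variation_bound_general Q P ν g hg u a b ha ha1 hb1 S' hS' hdom n A hAmeas hAdisj hAcov
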